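/- For every real number a > 0, ∫_0^1 (1/ln t + t^{a-1}/(1-t)) dt = -ψ(a). -/

import Mathlib

/-!
Write `G a` for the integral. Since `t ^ (a - 1) - t ^ a = t ^ (a - 1) * (1 - t)`, it satisfies
`G (a + 1) = G a - 1 / a`, and it is antitone in `a`; by the log-convexity of `Γ`, so is `-ψ`
with the same recurrence. Two antitone solutions of this recurrence that agree at `1` agree
on `(0, ∞)`: their difference is 1-periodic, and near a large integer `k` both drop by at most
`1 / k` over a unit step.

The value `G 1 = γ` comes from
`G a + log a = ∫₀¹ t ^ (a - 1) (1 / log t + 1 / (1 - t)) dt ∈ [0, 1 / a]`,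
which uses `∫₀¹ (t ^ (a - 1) - 1) / log t dt = log a` (differentiate in `a`) and
`0 ≤ 1 / log t + 1 / (1 - t) ≤ 1`, together with `G (n + 1) = G 1 - H n` and
`H n - log (n + 1) → γ`.
-/

open MeasureTheory Real intervalIntegral

/-- The digamma function `ψ(x) = Γ'(x)/Γ(x)`. -/
noncomputable def digamma (x : ℝ) : ℝ := deriv Real.Gamma x / Real.Gamma x

open Set Filter Topology

section AddOneEqSubInv

variable {f g : ℝ → ℝ}

theorem AntitoneOn.mem_Icc_of_add_one_eq_sub_inv (hf : AntitoneOn f (Ioi 0))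
    (hf_succ : ∀ x > 0, f (x + 1) = f x - x⁻¹) {x y : ℝ} (hx : 0 < x) (hxy : x ≤ y)
    (hyx : y ≤ x + 1) : f y ∈ Icc (f x - x⁻¹) (f x) := by
  have hy : y ∈ Ioi (0 : ℝ) := mem_Ioi.2 (hx.trans_le hxy)
  refine ⟨?_, hf hx hy hxy⟩
  rw [← hf_succ x hx]
  exact hf hy (mem_Ioi.2 (by linarith)) hyx

theorem eqOn_Ioi_of_antitoneOn_of_add_one_eq_sub_inv
    (hf : AntitoneOn f (Ioi 0)) (hg : AntitoneOn g (Ioi 0))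
    (hf_succ : ∀ x > 0, f (x + 1) = f x - x⁻¹) (hg_succ : ∀ x > 0, g (x + 1) = g x - x⁻¹)
    (h_one : f 1 = g 1) : EqOn f g (Ioi 0) := by
  have h_nat : ∀ n : ℕ, f (n + 1) = g (n + 1) := by
    intro n
    induction n with
    | zero => simpa using h_one
    | succ n ih =>
      have hn : (0 : ℝ) < n + 1 := by positivity
      rw [Nat.cast_succ, hf_succ _ hn, hg_succ _ hn, ih]
  have h_shift : ∀ x > 0, ∀ n : ℕ, f (x + n) - g (x + n) = f x - g x := by
    intro x hx n
    induction n with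
    | zero => simp
    | succ n ih =>
      have hxn : 0 < x + n := by positivity
      rw [Nat.cast_succ, ← add_assoc, hf_succ _ hxn, hg_succ _ hxn, ← ih]
      ring
  intro x (hx : 0 < x)
  have h_small : ∀ n : ℕ, |f x - g x| ≤ 1 / ((n : ℝ) + 1) := by
    intro n
    set k : ℝ := ⌊x⌋₊ + n + 1
    have hk : 0 < k := by positivity
    have hky : k ≤ x + (n + 1) := by linarith [Nat.floor_le hx.le]
    have hyk : x + (n + 1) ≤ k + 1 := by linarith [Nat.lt_floor_add_one x]
    have hfy := hf.mem_Icc_of_add_one_eq_sub_inv hf_succ hk hky hyk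
    have hgy := hg.mem_Icc_of_add_one_eq_sub_inv hg_succ hk hky hyk
    have hkg : f k = g k := by simpa [k] using h_nat (⌊x⌋₊ + n)
    have hk_inv : k⁻¹ ≤ 1 / ((n : ℝ) + 1) := by
      rw [one_div]; exact inv_anti₀ (by positivity) (by simp [k])
    have := h_shift x hx (n + 1)
    push_cast at this
    rw [← this, abs_le]
    constructor <;> linarith [hfy.1, hfy.2, hgy.1, hgy.2]
  have h_zero : |f x - g x| ≤ 0 :=
    ge_of_tendsto' tendsto_one_div_add_atTop_nhds_zero_nat h_small
  exact sub_eq_zero.1 (abs_nonpos_iff.1 h_zero)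

end AddOneEqSubInv

theorem differentiableAt_Gamma_of_pos {x : ℝ} (hx : 0 < x) : DifferentiableAt ℝ Gamma x :=
  differentiableAt_Gamma fun m hm => by linarith [hm ▸ hx, (Nat.cast_nonneg m : (0 : ℝ) ≤ m)]

theorem digamma_eq_deriv_log_Gamma {x : ℝ} (hx : 0 < x) :
    digamma x = deriv (log ∘ Gamma) x := by
  rw [digamma, Function.comp_def,
    deriv.log (differentiableAt_Gamma_of_pos hx) (Gamma_pos_of_pos hx).ne']

theorem digamma_add_one {x : ℝ} (hx : 0 < x) : digamma (x + 1) = digamma x + x⁻¹ := by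
  have hdiff : DifferentiableAt ℝ (log ∘ Gamma) x :=
    (differentiableAt_Gamma_of_pos hx).log (Gamma_pos_of_pos hx).ne'
  rw [digamma_eq_deriv_log_Gamma (by linarith), digamma_eq_deriv_log_Gamma hx,
    ← deriv_comp_add_const, ← deriv_log x, ← deriv_add hdiff (differentiableAt_log hx.ne')]
  apply EventuallyEq.deriv_eq
  filter_upwards [eventually_gt_nhds hx] with y hy
  simp only [Function.comp_apply, Gamma_add_one hy.ne',
    log_mul hy.ne' (Gamma_pos_of_pos hy).ne', add_comm]
  rfl

theorem digamma_monotoneOn : MonotoneOn digamma (Ioi 0) := by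
  intro x hx y hy hxy
  rw [digamma_eq_deriv_log_Gamma hx, digamma_eq_deriv_log_Gamma hy]
  exact convexOn_log_Gamma.monotoneOn_deriv
    (fun z hz => (differentiableAt_Gamma_of_pos hz).log (Gamma_pos_of_pos hz).ne') hx hy hxy

theorem digamma_one : digamma 1 = -eulerMascheroniConstant := by
  rw [digamma, hasDerivAt_Gamma_one.deriv, Gamma_one, div_one]

theorem one_sub_rpow_le_max_mul {t c : ℝ} (ht0 : 0 ≤ t) (ht1 : t ≤ 1) (hc : 0 ≤ c) :
    1 - t ^ c ≤ max c 1 * (1 - t) := by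
  rcases le_total c 1 with hc1 | hc1
  · have : t ≤ t ^ c := by
      simpa using rpow_le_rpow_of_exponent_ge' ht0 ht1 hc hc1
    nlinarith [le_max_right c 1]
  · have hbern : 1 + c * (t - 1) ≤ t ^ c := by
      simpa using one_add_mul_self_le_rpow_one_add (s := t - 1) (by linarith) hc1
    nlinarith [le_max_left c 1]

theorem mul_rpow_le_rpow_sub_one_div_log {t : ℝ} (ht : t ∈ Ioo 0 1) (c : ℝ) :
    c * t ^ c ≤ (t ^ c - 1) / log t := by
  have hlog : log t < 0 := log_neg ht.1 ht.2
  rw [le_div_iff_of_neg hlog, rpow_def_of_pos ht.1]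
  -- `1 - u ≤ exp (-u)` multiplied by `exp u`, for `u = log t * c`
  have h := add_one_le_exp (-(log t * c))
  rw [exp_neg] at h
  have hexp := exp_pos (log t * c)
  have := mul_le_mul_of_nonneg_left h hexp.le
  rw [mul_inv_cancel₀ hexp.ne'] at this
  nlinarith

theorem rpow_sub_one_div_log_le {t : ℝ} (ht : t ∈ Ioo 0 1) (c : ℝ) :
    (t ^ c - 1) / log t ≤ c := by
  have hlog : log t < 0 := log_neg ht.1 ht.2
  rw [div_le_iff_of_neg hlog, rpow_def_of_pos ht.1]
  linarith [add_one_le_exp (log t * c)]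

theorem integral_rpow_of_neg_one_lt {c : ℝ} (hc : -1 < c) :
    ∫ t in (0 : ℝ)..1, t ^ c = (c + 1)⁻¹ := by
  rw [integral_rpow (Or.inl hc), one_rpow, zero_rpow (by linarith), sub_zero, one_div]

theorem intervalIntegrable_of_le_of_le_on_Ioo {μ : Measure ℝ} [NullSingletonClass μ]
    {f g₁ g₂ : ℝ → ℝ} {a b : ℝ} (hab : a ≤ b)
    (hf : AEStronglyMeasurable f (μ.restrict (Ioc a b)))
    (h₁ : ∀ x ∈ Ioo a b, g₁ x ≤ f x) (h₂ : ∀ x ∈ Ioo a b, f x ≤ g₂ x)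
    (hg₁ : IntervalIntegrable g₁ μ a b) (hg₂ : IntervalIntegrable g₂ μ a b) :
    IntervalIntegrable f μ a b := by
  rw [intervalIntegrable_iff_integrableOn_Ioc_of_le hab] at *
  have hae (P : ℝ → Prop) (hP : ∀ x ∈ Ioo a b, P x) :
      ∀ᵐ x ∂μ.restrict (Ioc a b), P x :=
    (ae_restrict_congr_set Ioo_ae_eq_Ioc).1 (ae_restrict_of_forall_mem measurableSet_Ioo hP)
  exact integrable_of_le_of_le hf (hae _ h₁) (hae _ h₂) hg₁ hg₂

theorem intervalIntegrable_rpow_sub_one_div_log {c : ℝ} (hc : -1 < c) :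
    IntervalIntegrable (fun t => (t ^ c - 1) / log t) volume 0 1 :=
  intervalIntegrable_of_le_of_le_on_Ioo zero_le_one
    (by fun_prop : Measurable fun t : ℝ => (t ^ c - 1) / log t).aestronglyMeasurable
    (fun _ ht => mul_rpow_le_rpow_sub_one_div_log ht c) (fun _ ht => rpow_sub_one_div_log_le ht c)
    ((intervalIntegrable_rpow' hc).const_mul c) intervalIntegrable_const

theorem hasDerivAt_integral_rpow_sub_one_div_log {c : ℝ} (hc : -1 < c) :
    HasDerivAt (fun s => ∫ t in (0 : ℝ)..1, (t ^ s - 1) / log t) (c + 1)⁻¹ c := by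
  have hδ : 0 < (c + 1) / 2 := by linarith
  have h_mem : ∀ᵐ t ∂volume, t ∈ uIoc (0 : ℝ) 1 → t ∈ Ioo (0 : ℝ) 1 := by
    filter_upwards [volume.ae_ne 1] with t ht1 ht
    rw [uIoc_of_le zero_le_one] at ht
    exact ⟨ht.1, lt_of_le_of_ne ht.2 ht1⟩
  -- on the ball of radius `(c + 1) / 2` the derivative `t ^ s` is dominated by `t ^ ((c - 1) / 2)`
  have key := hasDerivAt_integral_of_dominated_loc_of_deriv_le (μ := volume)
    (F := fun s t => (t ^ s - 1) / log t) (F' := fun s t => t ^ s)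
    (bound := fun t => t ^ ((c - 1) / 2)) (Metric.ball_mem_nhds c hδ)
    (Eventually.of_forall fun s =>
      (by fun_prop : Measurable fun t : ℝ => (t ^ s - 1) / log t).aestronglyMeasurable)
    (intervalIntegrable_rpow_sub_one_div_log hc)
    (by fun_prop : Measurable fun t : ℝ => t ^ c).aestronglyMeasurable ?_
    (intervalIntegrable_rpow' (by linarith)) ?_
  · rw [integral_rpow_of_neg_one_lt hc] at key
    exact key.2
  · filter_upwards [h_mem] with t ht hmem s hs
    obtain ⟨ht0, ht1⟩ := ht hmem
    rw [norm_of_nonneg (rpow_nonneg ht0.le _)]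
    apply rpow_le_rpow_of_exponent_ge ht0 ht1.le
    have := (abs_lt.1 (Metric.mem_ball.1 hs)).1
    linarith
  · filter_upwards [h_mem] with t ht hmem s _
    obtain ⟨ht0, ht1⟩ := ht hmem
    have hlog : log t ≠ 0 := (log_neg ht0 ht1).ne
    have h := ((hasStrictDerivAt_const_rpow ht0 s).hasDerivAt.sub_const 1).div_const (log t)
    rwa [mul_div_cancel_right₀ _ hlog] at h

theorem integral_rpow_sub_one_div_log {c : ℝ} (hc : -1 < c) :
    ∫ t in (0 : ℝ)..1, (t ^ c - 1) / log t = log (c + 1) := by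
  have hpos : ∀ s ∈ uIcc 0 c, 0 < s + 1 := fun s hs => by
    linarith [(lt_min neg_one_lt_zero hc).trans_le hs.1]
  have hint : IntervalIntegrable (fun s : ℝ => (s + 1)⁻¹) volume 0 c :=
    (ContinuousOn.inv₀ (by fun_prop) fun s hs => (hpos s hs).ne').intervalIntegrable
  -- both sides vanish at `c = 0` and have derivative `(c + 1)⁻¹`
  have h_lhs := integral_eq_sub_of_hasDerivAt
    (fun s hs => hasDerivAt_integral_rpow_sub_one_div_log (c := s) (by linarith [hpos s hs])) hint
  have h_rhs := integral_eq_sub_of_hasDerivAt (f := fun s => log (s + 1))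
    (fun s hs => by simpa using ((hasDerivAt_id s).add_const 1).log (hpos s hs).ne') hint
  simp only [rpow_zero, sub_self, zero_div, intervalIntegral.integral_zero, zero_add, log_one]
    at h_lhs h_rhs
  linarith

noncomputable def gaussIntegrand (a t : ℝ) : ℝ := 1 / log t + t ^ (a - 1) / (1 - t)

noncomputable def gaussIntegral (a : ℝ) : ℝ := ∫ t in (0 : ℝ)..1, gaussIntegrand a t

theorem measurable_gaussIntegrand (a : ℝ) : Measurable (gaussIntegrand a) := by
  unfold gaussIntegrand; fun_prop

theorem rpow_mul_gaussIntegrand_one (a t : ℝ) :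
    t ^ (a - 1) * gaussIntegrand 1 t = gaussIntegrand a t + (t ^ (a - 1) - 1) / log t := by
  rw [gaussIntegrand, gaussIntegrand, sub_self, rpow_zero]; ring

section gaussIntegrand

variable {t : ℝ}

theorem gaussIntegrand_sub_gaussIntegrand_add_one (a : ℝ) (ht0 : t ≠ 0) (ht1 : t ≠ 1) :
    gaussIntegrand a t - gaussIntegrand (a + 1) t = t ^ (a - 1) := by
  have h1t : 1 - t ≠ 0 := sub_ne_zero.2 ht1.symm
  rw [gaussIntegrand, gaussIntegrand, add_sub_cancel_right, ← sub_add_cancel a 1,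
    rpow_add_one ht0, add_sub_cancel_right]
  field_simp
  ring

theorem gaussIntegrand_le_of_le (ht : t ∈ Ioo 0 1) {a b : ℝ} (hab : a ≤ b) :
    gaussIntegrand b t ≤ gaussIntegrand a t := by
  have : t ^ (b - 1) ≤ t ^ (a - 1) := rpow_le_rpow_of_exponent_ge ht.1 ht.2.le (by linarith)
  have : 0 < 1 - t := sub_pos.2 ht.2
  unfold gaussIntegrand
  gcongr

theorem gaussIntegrand_one_nonneg (ht : t ∈ Ioo 0 1) : 0 ≤ gaussIntegrand 1 t := by
  have hlog : 0 < -log t := neg_pos.2 (log_neg ht.1 ht.2)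
  have h1t : 0 < 1 - t := sub_pos.2 ht.2
  have : 1 / -log t ≤ 1 / (1 - t) :=
    one_div_le_one_div_of_le h1t (by linarith [log_le_sub_one_of_pos ht.1])
  rw [gaussIntegrand, sub_self, rpow_zero]
  rw [div_neg] at this
  linarith

theorem gaussIntegrand_one_le_one (ht : t ∈ Ioo 0 1) : gaussIntegrand 1 t ≤ 1 := by
  have hlog : 0 < -log t := neg_pos.2 (log_neg ht.1 ht.2)
  have h1t : 0 < 1 - t := sub_pos.2 ht.2
  -- from `log (1 / t) ≤ 1 / t - 1`
  have hkey : t * -log t ≤ 1 - t := by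
    have := log_le_sub_one_of_pos (inv_pos.2 ht.1)
    rw [log_inv] at this
    have := mul_le_mul_of_nonneg_left this ht.1.le
    rwa [mul_sub, mul_inv_cancel₀ ht.1.ne', mul_one] at this
  have : t / (1 - t) ≤ 1 / -log t := by
    rw [div_le_div_iff₀ h1t hlog]; linarith
  have hsplit : 1 / (1 - t) = 1 + t / (1 - t) := by field_simp; ring
  rw [gaussIntegrand, sub_self, rpow_zero, ← neg_neg (log t), div_neg, hsplit]
  linarith

theorem gaussIntegrand_le_one_add_rpow (ht : t ∈ Ioo 0 1) {a : ℝ} (ha : 0 ≤ a) :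
    gaussIntegrand a t ≤ 1 + t ^ (a - 1) := by
  have hshift := gaussIntegrand_sub_gaussIntegrand_add_one a ht.1.ne' ht.2.ne
  have := gaussIntegrand_le_of_le ht (show 1 ≤ a + 1 by linarith)
  linarith [gaussIntegrand_one_le_one ht]

theorem neg_max_le_gaussIntegrand (ht : t ∈ Ioo 0 1) (a : ℝ) :
    -max (a - 1) 1 ≤ gaussIntegrand a t := by
  rcases le_total a 1 with ha | ha
  · linarith [gaussIntegrand_le_of_le ht ha, gaussIntegrand_one_nonneg ht,
      le_max_right (a - 1) 1]
  · have h1t : 0 < 1 - t := sub_pos.2 ht.2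
    have hdiff : gaussIntegrand 1 t - gaussIntegrand a t = (1 - t ^ (a - 1)) / (1 - t) := by
      rw [gaussIntegrand, gaussIntegrand, sub_self, rpow_zero]; ring
    have : (1 - t ^ (a - 1)) / (1 - t) ≤ max (a - 1) 1 := by
      rw [div_le_iff₀ h1t]
      exact one_sub_rpow_le_max_mul ht.1.le ht.2.le (by linarith)
    linarith [gaussIntegrand_one_nonneg ht]

end gaussIntegrand

theorem intervalIntegrable_gaussIntegrand {a : ℝ} (ha : 0 < a) :
    IntervalIntegrable (gaussIntegrand a) volume 0 1 :=
  intervalIntegrable_of_le_of_le_on_Ioo zero_le_one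
    (measurable_gaussIntegrand a).aestronglyMeasurable
    (fun _ ht => neg_max_le_gaussIntegrand ht a)
    (fun _ ht => gaussIntegrand_le_one_add_rpow ht ha.le)
    intervalIntegrable_const (intervalIntegrable_const.add (intervalIntegrable_rpow' (by linarith)))

theorem gaussIntegral_add_one {a : ℝ} (ha : 0 < a) :
    gaussIntegral (a + 1) = gaussIntegral a - a⁻¹ := by
  have hdiff : ∫ t in (0 : ℝ)..1, (gaussIntegrand a t - gaussIntegrand (a + 1) t) = a⁻¹ := by
    rw [← sub_add_cancel a 1, ← integral_rpow_of_neg_one_lt (by linarith : -1 < a - 1),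
      sub_add_cancel]
    refine integral_congr_ae ?_
    filter_upwards [volume.ae_ne 0, volume.ae_ne 1] with t ht0 ht1 _
    exact gaussIntegrand_sub_gaussIntegrand_add_one a ht0 ht1
  rw [integral_sub (intervalIntegrable_gaussIntegrand ha)
    (intervalIntegrable_gaussIntegrand (by linarith))] at hdiff
  rw [gaussIntegral, gaussIntegral]
  linarith

theorem gaussIntegral_antitoneOn : AntitoneOn gaussIntegral (Ioi 0) :=
  fun _ ha _ hb hab => integral_mono_on_of_le_Ioo zero_le_one
    (intervalIntegrable_gaussIntegrand hb) (intervalIntegrable_gaussIntegrand ha)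
    fun _ ht => gaussIntegrand_le_of_le ht hab

theorem gaussIntegral_nat_add_one (n : ℕ) :
    gaussIntegral (n + 1) = gaussIntegral 1 - harmonic n := by
  induction n with
  | zero => simp
  | succ n ih =>
    rw [Nat.cast_succ, gaussIntegral_add_one (by positivity), ih, harmonic_succ]
    push_cast
    ring

theorem gaussIntegral_add_log_mem_Icc {a : ℝ} (ha : 0 < a) :
    gaussIntegral a + log a ∈ Icc 0 a⁻¹ := by
  have hc : -1 < a - 1 := by linarith
  have hfun : (fun t => t ^ (a - 1) * gaussIntegrand 1 t)
      = fun t => gaussIntegrand a t + (t ^ (a - 1) - 1) / log t :=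
    funext fun t => rpow_mul_gaussIntegrand_one a t
  have hint : IntervalIntegrable (fun t => t ^ (a - 1) * gaussIntegrand 1 t) volume 0 1 := by
    rw [hfun]
    exact (intervalIntegrable_gaussIntegrand ha).add (intervalIntegrable_rpow_sub_one_div_log hc)
  have heq : gaussIntegral a + log a = ∫ t in (0 : ℝ)..1, t ^ (a - 1) * gaussIntegrand 1 t := by
    rw [hfun, integral_add (intervalIntegrable_gaussIntegrand ha)
      (intervalIntegrable_rpow_sub_one_div_log hc), integral_rpow_sub_one_div_log hc,
      sub_add_cancel, gaussIntegral]
  rw [heq]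
  constructor
  · simpa using integral_mono_on_of_le_Ioo zero_le_one intervalIntegrable_const hint
      fun t ht => mul_nonneg (rpow_nonneg ht.1.le _) (gaussIntegrand_one_nonneg ht)
  · rw [← sub_add_cancel a 1, ← integral_rpow_of_neg_one_lt hc, sub_add_cancel]
    refine integral_mono_on_of_le_Ioo zero_le_one hint (intervalIntegrable_rpow' hc) fun t ht => ?_
    exact mul_le_of_le_one_right (rpow_nonneg ht.1.le _) (gaussIntegrand_one_le_one ht)

theorem tendsto_gaussIntegral_nat_add_one_add_log :
    Tendsto (fun n : ℕ => gaussIntegral (n + 1) + log (n + 1)) atTop (𝓝 0) := by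
  refine squeeze_zero (fun n => (gaussIntegral_add_log_mem_Icc (by positivity)).1)
    (fun n => ?_) tendsto_one_div_add_atTop_nhds_zero_nat
  rw [one_div]
  exact (gaussIntegral_add_log_mem_Icc (by positivity)).2

theorem gaussIntegral_one : gaussIntegral 1 = eulerMascheroniConstant := by
  have h := tendsto_gaussIntegral_nat_add_one_add_log.add tendsto_harmonic_sub_log_add_one
  have hconst : (fun n : ℕ => gaussIntegral (n + 1) + log (n + 1) + (harmonic n - log (n + 1)))
      = fun _ => gaussIntegral 1 :=
    funext fun n => by rw [gaussIntegral_nat_add_one]; ring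
  rw [hconst, zero_add] at h
  exact tendsto_nhds_unique tendsto_const_nhds h

theorem integral_inv_log_add_rpow_div_one_sub (a : ℝ) (ha : 0 < a) :
    ∫ t in (0 : ℝ)..1, (1 / Real.log t + t ^ (a - 1) / (1 - t)) = -digamma a :=
  eqOn_Ioi_of_antitoneOn_of_add_one_eq_sub_inv gaussIntegral_antitoneOn digamma_monotoneOn.neg
    (fun _ hx => gaussIntegral_add_one hx) (fun x hx => by rw [digamma_add_one hx]; ring)
    (by rw [gaussIntegral_one, digamma_one, neg_neg]) ha
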